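/- arXiv:1806.08459 — 3 statements merged into one kernel-verified Lean document; each statement's English description precedes it below -/
import Mathlib

section
/- Let S = (d, N_1, ..., N_{L-1}, 1) be a neural network architecture with L ≥ 2, and let ρ : ℝ → ℝ satisfy: (i) ρ is continuous and monotonically increasing; (ii) ρ is differentiable at some x_0 ∈ ℝ with ρ'(x_0) ≠ 0; (iii) there is r > 0 such that ρ restricted to (-∞,-r) ∪ (r,∞) is differentiable; and (iv) either (a) there exist λ, λ' ≥ 0 with λ ≠ λ' such that ρ'(x) → λ as x → ∞ and ρ'(x) → λ' as x → -∞, and N_{L-1} ≥ 2, or (b) ρ is bounded. Let B > 0 and let μ be a finite Borel measure on [-B,B]^d whose support is uncountable. Then there exists a bounded measurable function f : [-B,B]^d → ℝ such that for every p ∈ (0,∞), f lies in the closure of RNN_ρ^{[-B,B]^d}(S) in L^p(μ) but f does not agree μ-almost everywhere with any element of RNN_ρ^{[-B,B]^d}(S). In particular, RNN_ρ^{[-B,B]^d}(S) is not closed in L^p(μ) for any p ∈ (0,∞). -/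
open scoped BigOperators ENNReal NNReal Pointwise
open Filter MeasureTheory Topology

abbrev NNLayer (N : ℕ → ℕ) (ℓ : ℕ) : Type :=
  (Fin (N (ℓ + 1)) → Fin (N ℓ) → ℝ) × (Fin (N (ℓ + 1)) → ℝ)

abbrev NNParams (L : ℕ) (N : ℕ → ℕ) : Type :=
  (ℓ : Fin L) → NNLayer N ℓ.val

noncomputable def nnAffine {N : ℕ → ℕ} {ℓ : ℕ} (W : NNLayer N ℓ) (x : Fin (N ℓ) → ℝ) :
    Fin (N (ℓ + 1)) → ℝ :=
  fun i => (∑ j, W.1 i j * x j) + W.2 i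

noncomputable def nnHidden (ρ : ℝ → ℝ) :
    (L : ℕ) → (N : ℕ → ℕ) → NNParams L N → (Fin (N 0) → ℝ) → Fin (N L) → ℝ
  | 0, _, _, x => x
  | L + 1, N, Φ, x =>
      nnHidden ρ L (fun k => N (k + 1))
        (fun ℓ => Φ ⟨ℓ.val + 1, Nat.succ_lt_succ ℓ.isLt⟩)
        (fun i => ρ (nnAffine (Φ ⟨0, Nat.succ_pos L⟩) x i))

noncomputable def nnRealization (ρ : ℝ → ℝ) :
    (L : ℕ) → (N : ℕ → ℕ) → NNParams L N → (Fin (N 0) → ℝ) → Fin (N L) → ℝ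
  | 0, _, _, x => x
  | L + 1, N, Φ, x =>
      nnAffine (Φ ⟨L, Nat.lt_succ_self L⟩)
        (nnHidden ρ L N (fun ℓ => Φ ⟨ℓ.val, Nat.lt_succ_of_lt ℓ.isLt⟩) x)

noncomputable def nnRealizationScalar (ρ : ℝ → ℝ) (L : ℕ) (N : ℕ → ℕ) (h : N L = 1)
    (Φ : NNParams L N) (x : Fin (N 0) → ℝ) : ℝ :=
  nnRealization ρ L N Φ x ⟨0, by rw [h]; exact Nat.one_pos⟩

noncomputable def nnScalingNorm {L : ℕ} {N : ℕ → ℕ} (Φ : NNParams L N) : ℝ :=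
  ⨆ ℓ : Fin L, ‖(Φ ℓ).1‖

noncomputable def nnTotalNorm {L : ℕ} {N : ℕ → ℕ} (Φ : NNParams L N) : ℝ :=
  nnScalingNorm Φ + ⨆ ℓ : Fin L, ‖(Φ ℓ).2‖

/-- The (topological) support of a measure: points all of whose open neighbourhoods
have positive measure. -/
def measureSupport {α : Type*} [TopologicalSpace α] [MeasurableSpace α]
    (μ : Measure α) : Set α :=
  {x | ∀ U : Set α, IsOpen U → x ∈ U → 0 < μ U}

/-!
Since the support is uncountable, it contains a point `z` approached by support points from both
sides of the hyperplane `{x | x k = z k}` for some coordinate `k`; the witness is the step function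
`x ↦ if z k ≤ x k then A else A'`. A chain network whose first layer computes
`n (x k - z k) + √n` and whose further layers compute `w ↦ n (ρ w - b)`, with `b` strictly between
two values of `ρ`, drives its last pre-activation to `+∞` or `-∞` according to the side of the
hyperplane. Reading it out through `ρ` itself (bounded case, `A, A' = sup ρ, inf ρ`) or through
`ρ (w + 1) - ρ w` (limits `λ, λ'` by the mean value theorem) gives realizations converging
boundedly and pointwise to the step function, hence in every `L^p`, `0 < p < ∞`. Realizations are
continuous, and a continuous function a.e. equal to the step function would take both values `A`
and `A'` at `z`.
-/

section Network

variable (ρ : ℝ → ℝ)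

lemma nnHidden_succ_eq_last :
    ∀ (L : ℕ) (N : ℕ → ℕ) (Φ : NNParams (L + 1) N) (x : Fin (N 0) → ℝ),
      nnHidden ρ (L + 1) N Φ x =
        fun i => ρ (nnAffine (Φ (Fin.last L)) (nnHidden ρ L N (Fin.init Φ) x) i)
  | 0, _, _, _ => rfl
  | L + 1, N, Φ, _ => nnHidden_succ_eq_last L (fun k => N (k + 1)) (Fin.tail Φ) _

lemma nnHidden_snoc (L : ℕ) (N : ℕ → ℕ) (Φ : NNParams L N) (W : NNLayer N L)
    (x : Fin (N 0) → ℝ) :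
    nnHidden ρ (L + 1) N (Fin.snoc (α := fun ℓ => NNLayer N ℓ.val) Φ W) x =
      fun i => ρ (nnAffine W (nnHidden ρ L N Φ x) i) := by
  rw [nnHidden_succ_eq_last, Fin.snoc_last, Fin.init_snoc]
  rfl

lemma nnRealization_succ_eq_last (L : ℕ) (N : ℕ → ℕ) (Φ : NNParams (L + 1) N)
    (x : Fin (N 0) → ℝ) :
    nnRealization ρ (L + 1) N Φ x = nnAffine (Φ (Fin.last L)) (nnHidden ρ L N (Fin.init Φ) x) :=
  rfl

lemma nnRealization_snoc (L : ℕ) (N : ℕ → ℕ) (Φ : NNParams L N) (W : NNLayer N L)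
    (x : Fin (N 0) → ℝ) :
    nnRealization ρ (L + 1) N (Fin.snoc (α := fun ℓ => NNLayer N ℓ.val) Φ W) x =
      nnAffine W (nnHidden ρ L N Φ x) := by
  rw [nnRealization_succ_eq_last, Fin.snoc_last, Fin.init_snoc]

lemma exists_nnHidden_succ_eq {L : ℕ} {N : ℕ → ℕ} (Φ : NNParams L N) (j : Fin (N L))
    (w b : Fin (N (L + 1)) → ℝ) :
    ∃ Φ' : NNParams (L + 1) N, ∀ x,
      nnHidden ρ (L + 1) N Φ' x = fun i => ρ (w i * nnHidden ρ L N Φ x j + b i) := by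
  refine ⟨Fin.snoc (α := fun ℓ => NNLayer N ℓ.val) Φ (fun i => Pi.single j (w i), b),
    fun x => ?_⟩
  simp [nnHidden_snoc, nnAffine, Pi.single_apply, ite_mul]

lemma exists_nnHidden_eq_iterate {m : ℕ} {N : ℕ → ℕ} (hN : ∀ j < m, 0 < N (j + 1))
    (k : Fin (N 0)) (a₀ c₀ a c : ℝ) (e : Fin (N (m + 1)) → ℝ) :
    ∃ Φ : NNParams (m + 1) N, ∀ x, nnHidden ρ (m + 1) N Φ x =
      fun i => ρ ((fun w => a * ρ w + c)^[m] (a₀ * x k + c₀) + e i) := by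
  induction m with
  | zero =>
    obtain ⟨Φ, hΦ⟩ := exists_nnHidden_succ_eq ρ (N := N) (fun ℓ => ℓ.elim0) k (fun _ => a₀)
      (fun i => c₀ + e i)
    exact ⟨Φ, fun x => by simp only [hΦ, Function.iterate_zero, id, add_assoc]; rfl⟩
  | succ m ih =>
    obtain ⟨Φ, hΦ⟩ := ih (fun j hj => hN j (by omega)) 0
    obtain ⟨Φ', hΦ'⟩ := exists_nnHidden_succ_eq ρ Φ ⟨0, hN m (by omega)⟩ (fun _ => a)
      (fun i => c + e i)
    refine ⟨Φ', fun x => ?_⟩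
    simp only [hΦ', hΦ, Function.iterate_succ_apply', Pi.zero_apply, add_zero, add_assoc]

lemma exists_nnRealizationScalar_eq_sum {m : ℕ} {N : ℕ → ℕ} (hNL : N (m + 2) = 1)
    (hN : ∀ j < m, 0 < N (j + 1)) (k : Fin (N 0)) (a₀ c₀ a c : ℝ) (e v : Fin (N (m + 1)) → ℝ) :
    ∃ Φ : NNParams (m + 2) N, ∀ x, nnRealizationScalar ρ (m + 2) N hNL Φ x =
      ∑ i, v i * ρ ((fun w => a * ρ w + c)^[m] (a₀ * x k + c₀) + e i) := by
  obtain ⟨Φ, hΦ⟩ := exists_nnHidden_eq_iterate ρ hN k a₀ c₀ a c e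
  refine ⟨Fin.snoc (α := fun ℓ => NNLayer N ℓ.val) Φ (fun _ => v, 0), fun x => ?_⟩
  simp [nnRealizationScalar, nnRealization_snoc, nnAffine, hΦ]

end Network

section Continuity

variable {ρ : ℝ → ℝ}

lemma continuous_nnAffine {N : ℕ → ℕ} {ℓ : ℕ} (W : NNLayer N ℓ) : Continuous (nnAffine W) :=
  continuous_pi fun _ =>
    (continuous_finsetSum _ fun j _ => continuous_const.mul (continuous_apply j)).add
      continuous_const

lemma continuous_nnHidden (hρ : Continuous ρ) :
    ∀ (L : ℕ) (N : ℕ → ℕ) (Φ : NNParams L N), Continuous (nnHidden ρ L N Φ)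
  | 0, _, _ => continuous_id
  | L + 1, _, _ => (continuous_nnHidden hρ L _ _).comp
      (continuous_pi fun i => hρ.comp ((continuous_apply i).comp (continuous_nnAffine _)))

lemma continuous_nnRealizationScalar (hρ : Continuous ρ) {L : ℕ} {N : ℕ → ℕ} (hNL : N L = 1)
    (Φ : NNParams L N) : Continuous (nnRealizationScalar ρ L N hNL Φ) := by
  refine (continuous_apply _).comp ?_
  cases L with
  | zero => exact continuous_id
  | succ L => exact (continuous_nnAffine _).comp (continuous_nnHidden hρ L N _)

end Continuity

def IsChainReadout (ρ : ℝ → ℝ) (m : ℕ) (N : ℕ → ℕ) (hNL : N (m + 2) = 1) (φ : ℝ → ℝ) :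
    Prop :=
  ∀ (k : Fin (N 0)) (a₀ c₀ a c : ℝ), ∃ Φ : NNParams (m + 2) N, ∀ x,
    nnRealizationScalar ρ (m + 2) N hNL Φ x = φ ((fun w => a * ρ w + c)^[m] (a₀ * x k + c₀))

lemma isChainReadout_self {ρ : ℝ → ℝ} {m : ℕ} {N : ℕ → ℕ} (hNL : N (m + 2) = 1)
    (hN : ∀ j ≤ m, 0 < N (j + 1)) : IsChainReadout ρ m N hNL ρ := by
  intro k a₀ c₀ a c
  obtain ⟨Φ, hΦ⟩ := exists_nnRealizationScalar_eq_sum ρ hNL (fun j hj => hN j hj.le) k a₀ c₀ a c 0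
    (Pi.single ⟨0, hN m le_rfl⟩ 1)
  exact ⟨Φ, fun x => by simp [hΦ, Pi.single_apply, ite_mul]⟩

lemma isChainReadout_sub {ρ : ℝ → ℝ} {m : ℕ} {N : ℕ → ℕ} (hNL : N (m + 2) = 1)
    (hN : ∀ j < m, 0 < N (j + 1)) (hwidth : 2 ≤ N (m + 1)) :
    IsChainReadout ρ m N hNL fun w => ρ (w + 1) - ρ w := by
  intro k a₀ c₀ a c
  let i₀ : Fin (N (m + 1)) := ⟨0, by omega⟩
  let i₁ : Fin (N (m + 1)) := ⟨1, by omega⟩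
  obtain ⟨Φ, hΦ⟩ := exists_nnRealizationScalar_eq_sum ρ hNL hN k a₀ c₀ a c (Pi.single i₀ 1)
    (Pi.single i₀ 1 - Pi.single i₁ 1)
  refine ⟨Φ, fun x => ?_⟩
  have hne : i₁ ≠ i₀ := by simp [i₀, i₁, Fin.ext_iff]
  simp [hΦ, Pi.single_apply, sub_mul, ite_mul, Finset.sum_sub_distrib, hne]

lemma exists_lt_of_hasDerivAt_ne_zero {f : ℝ → ℝ} {c x₀ : ℝ} (hf : HasDerivAt f c x₀)
    (hc : c ≠ 0) : ∃ u v, f u < f v := by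
  by_contra! h
  have hconst : f = fun _ => f x₀ := funext fun x => le_antisymm (h x₀ x) (h x x₀)
  rw [hconst] at hf
  exact hc (hf.unique (hasDerivAt_const x₀ (f x₀)))

lemma tendsto_natCast_mul_add_sqrt_atTop {y : ℝ} (hy : 0 ≤ y) :
    Tendsto (fun n : ℕ => n * y + √n) atTop atTop :=
  tendsto_atTop_mono (fun n => le_add_of_nonneg_left (by positivity))
    (Real.tendsto_sqrt_atTop.comp tendsto_natCast_atTop_atTop)

lemma tendsto_natCast_mul_add_sqrt_atBot {y : ℝ} (hy : y < 0) :
    Tendsto (fun n : ℕ => n * y + √n) atTop atBot := by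
  have hsqrt : Tendsto (fun n : ℕ => √(n : ℝ)) atTop atTop :=
    Real.tendsto_sqrt_atTop.comp tendsto_natCast_atTop_atTop
  refine (hsqrt.atTop_mul_atBot₀ (tendsto_atBot_add_const_right _ 1
    (hsqrt.atTop_mul_const_of_neg hy))).congr fun n => ?_
  rw [mul_add, ← mul_assoc, Real.mul_self_sqrt n.cast_nonneg, mul_one]

section Iterate

variable {ρ : ℝ → ℝ} {ι : Type*} {l : Filter ι} {a t : ι → ℝ} {b : ℝ}

lemma tendsto_iterate_atTop (hρ : Monotone ρ) {v : ℝ} (hv : b < ρ v) (ha : Tendsto a l atTop)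
    (ht : Tendsto t l atTop) (j : ℕ) :
    Tendsto (fun i => (fun w => a i * (ρ w - b))^[j] (t i)) l atTop := by
  induction j with
  | zero => exact ht
  | succ j ih =>
    simp only [Function.iterate_succ_apply']
    refine tendsto_atTop_mono' l ?_ (ha.atTop_mul_const (sub_pos.2 hv))
    filter_upwards [ih.eventually_ge_atTop v, ha.eventually_ge_atTop 0] with i hi hai
    exact mul_le_mul_of_nonneg_left (sub_le_sub_right (hρ hi) b) hai

lemma tendsto_iterate_atBot (hρ : Monotone ρ) {u : ℝ} (hu : ρ u < b) (ha : Tendsto a l atTop)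
    (ht : Tendsto t l atBot) (j : ℕ) :
    Tendsto (fun i => (fun w => a i * (ρ w - b))^[j] (t i)) l atBot := by
  induction j with
  | zero => exact ht
  | succ j ih =>
    simp only [Function.iterate_succ_apply']
    refine tendsto_atBot_mono' l ?_ (ha.atTop_mul_const_of_neg (sub_neg.2 hu))
    filter_upwards [ih.eventually_le_atBot u, ha.eventually_ge_atTop 0] with i hi hai
    exact mul_le_mul_of_nonneg_left (sub_le_sub_right (hρ hi) b) hai

end Iterate

lemma tendsto_readout_iterate {ρ φ : ℝ → ℝ} (hρ : Monotone ρ) {u v b A A' : ℝ} (hu : ρ u < b)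
    (hv : b < ρ v) (htop : Tendsto φ atTop (𝓝 A)) (hbot : Tendsto φ atBot (𝓝 A')) (m : ℕ)
    (θ s : ℝ) :
    Tendsto (fun n : ℕ => φ ((fun w => n * ρ w + -(n * b))^[m] (n * s + (√n - n * θ))))
      atTop (𝓝 (if θ ≤ s then A else A')) := by
  -- the offset `√n` puts the boundary case `s = θ` on the `+∞` side
  have hmap : ∀ n : ℕ, (fun w => n * ρ w + -(n * b)) = fun w => n * (ρ w - b) :=
    fun n => funext fun w => by ring
  have hinput : ∀ n : ℕ, n * s + (√n - n * θ) = n * (s - θ) + √n := fun n => by ring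
  simp only [hmap, hinput]
  split_ifs with hθ
  · exact htop.comp (tendsto_iterate_atTop hρ hv tendsto_natCast_atTop_atTop
      (tendsto_natCast_mul_add_sqrt_atTop (sub_nonneg.2 hθ)) m)
  · exact hbot.comp (tendsto_iterate_atBot hρ hu tendsto_natCast_atTop_atTop
      (tendsto_natCast_mul_add_sqrt_atBot (sub_neg.2 (not_le.1 hθ))) m)

lemma exists_sub_eq_deriv {f : ℝ → ℝ} {r : ℝ} (hf : ∀ x, r < |x| → DifferentiableAt ℝ f x) :
    ∃ ξ : ℝ → ℝ, ∀ x, ξ x ∈ Set.Icc x (x + 1) ∧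
      (r < x ∨ x + 1 < -r → f (x + 1) - f x = deriv f (ξ x)) := by
  have h : ∀ x, ∃ ξ ∈ Set.Icc x (x + 1),
      (r < x ∨ x + 1 < -r → f (x + 1) - f x = deriv f ξ) := by
    intro x
    by_cases hx : r < x ∨ x + 1 < -r
    · have hdiff : ∀ y ∈ Set.Icc x (x + 1), DifferentiableAt ℝ f y := fun y hy =>
        hf y (by rcases hx with hx | hx <;> cases abs_cases y <;> linarith [hy.1, hy.2])
      obtain ⟨ξ, hξ, hslope⟩ := exists_deriv_eq_slope f (lt_add_one x)
        (fun y hy => (hdiff y hy).continuousAt.continuousWithinAt)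
        (fun y hy => (hdiff y (Set.Ioo_subset_Icc_self hy)).differentiableWithinAt)
      exact ⟨ξ, Set.Ioo_subset_Icc_self hξ, fun _ => by simpa using hslope.symm⟩
    · exact ⟨x, ⟨le_rfl, by linarith⟩, fun h => absurd h hx⟩
  choose ξ hξ hξ' using h
  exact ⟨ξ, fun x => ⟨hξ x, hξ' x⟩⟩

lemma tendsto_sub_atTop_of_tendsto_deriv {f : ℝ → ℝ} {r c : ℝ}
    (hf : ∀ x, r < |x| → DifferentiableAt ℝ f x) (h : Tendsto (deriv f) atTop (𝓝 c)) :
    Tendsto (fun x => f (x + 1) - f x) atTop (𝓝 c) := by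
  obtain ⟨ξ, hξ⟩ := exists_sub_eq_deriv hf
  have hξtop : Tendsto ξ atTop atTop := tendsto_atTop_mono (fun x => (hξ x).1.1) tendsto_id
  refine (h.comp hξtop).congr' ?_
  filter_upwards [eventually_gt_atTop r] with x hx
  exact ((hξ x).2 (Or.inl hx)).symm

lemma tendsto_sub_atBot_of_tendsto_deriv {f : ℝ → ℝ} {r c : ℝ}
    (hf : ∀ x, r < |x| → DifferentiableAt ℝ f x) (h : Tendsto (deriv f) atBot (𝓝 c)) :
    Tendsto (fun x => f (x + 1) - f x) atBot (𝓝 c) := by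
  obtain ⟨ξ, hξ⟩ := exists_sub_eq_deriv hf
  have hξbot : Tendsto ξ atBot atBot :=
    tendsto_atBot_mono (fun x => (hξ x).1.2) (tendsto_atBot_add_const_right _ 1 tendsto_id)
  refine (h.comp hξbot).congr' ?_
  filter_upwards [eventually_lt_atBot (-r - 1)] with x hx
  exact ((hξ x).2 (Or.inr (by linarith))).symm

lemma exists_ne_tendsto_atTop_atBot_of_monotone {f : ℝ → ℝ} (hf : Monotone f) {M : ℝ}
    (hM : ∀ x, |f x| ≤ M) {u v : ℝ} (huv : f u < f v) :
    ∃ A A', A ≠ A' ∧ Tendsto f atTop (𝓝 A) ∧ Tendsto f atBot (𝓝 A') := by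
  have hbdd : Bornology.IsBounded (Set.range f) :=
    isBounded_iff_forall_norm_le.2 ⟨M, by rintro _ ⟨x, rfl⟩; exact hM x⟩
  exact ⟨_, _, ((ciInf_le hbdd.bddBelow u).trans_lt huv).trans_le (le_ciSup hbdd.bddAbove v) |>.ne',
    tendsto_atTop_ciSup hf hbdd.bddAbove, tendsto_atBot_ciInf hf hbdd.bddBelow⟩

lemma exists_abs_le_of_tendsto_atTop_atBot {f : ℝ → ℝ} (hf : Continuous f) {A A' : ℝ}
    (htop : Tendsto f atTop (𝓝 A)) (hbot : Tendsto f atBot (𝓝 A')) : ∃ C, ∀ x, |f x| ≤ C := by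
  obtain ⟨C, hC⟩ := isBounded_iff_forall_norm_le.1
    (hf.isBounded_range_iff_isBigO_atTop_atBot.2 ⟨htop.isBigO_one ℝ, hbot.isBigO_one ℝ⟩)
  exact ⟨C, fun x => hC _ ⟨x, rfl⟩⟩

lemma countable_image_setOf_isLocalMinOn {X α : Type*} [TopologicalSpace X]
    [SecondCountableTopology X] [PartialOrder α] (f : X → α) (s : Set X) :
    (f '' {x ∈ s | IsLocalMinOn f s x}).Countable := by
  -- a basic open set `U` on which `x` minimizes `f` over `s` determines `f x`
  set B := TopologicalSpace.countableBasis X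
  have hB := TopologicalSpace.isBasis_countableBasis X
  have hsub : f '' {x ∈ s | IsLocalMinOn f s x} ⊆
      ⋃ U ∈ B, f '' {x ∈ s ∩ U | ∀ y ∈ s ∩ U, f x ≤ f y} := by
    rintro _ ⟨x, ⟨hxs, hx⟩, rfl⟩
    obtain ⟨V, hV, hxV, hVs⟩ := mem_nhdsWithin.1 hx
    obtain ⟨U, hU, hxU, hUV⟩ := hB.exists_subset_of_mem_open hxV hV
    exact Set.mem_biUnion hU
      ⟨x, ⟨⟨hxs, hxU⟩, fun y hy => hVs ⟨hUV hy.2, hy.1⟩⟩, rfl⟩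
  refine Set.Countable.mono hsub
    ((TopologicalSpace.countable_countableBasis X).biUnion fun U _ => ?_)
  refine Set.Subsingleton.countable ?_
  rintro _ ⟨x, hx, rfl⟩ _ ⟨y, hy, rfl⟩
  exact le_antisymm (hx.2 y hy.1) (hy.2 x hx.1)

lemma countable_image_setOf_isLocalMaxOn {X α : Type*} [TopologicalSpace X]
    [SecondCountableTopology X] [PartialOrder α] (f : X → α) (s : Set X) :
    (f '' {x ∈ s | IsLocalMaxOn f s x}).Countable :=
  countable_image_setOf_isLocalMinOn (α := αᵒᵈ) f s

lemma isLocalMinOn_of_notMem_closure {X α : Type*} [TopologicalSpace X] [LinearOrder α]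
    {f : X → α} {s : Set X} {x : X} (hx : x ∉ closure (s ∩ {y | f y < f x})) :
    IsLocalMinOn f s x := by
  rw [mem_closure_iff_nhdsWithin_neBot, not_neBot, nhdsWithin_inter', inf_principal_eq_bot] at hx
  filter_upwards [hx] with y hy
  exact not_lt.1 hy

lemma exists_mem_closure_inter_lt_and_gt {ι : Type*} [Finite ι] {s : Set (ι → ℝ)}
    (hs : ¬ s.Countable) :
    ∃ z ∈ s, ∃ k, z ∈ closure (s ∩ {x | x k < z k}) ∧ z ∈ closure (s ∩ {x | z k < x k}) := by
  by_contra! h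
  -- otherwise every coordinate of a point of `s` is a value of a local extremum on `s`
  set V : ι → Set ℝ := fun k =>
    (· k) '' {x ∈ s | IsLocalMinOn (· k) s x} ∪ (· k) '' {x ∈ s | IsLocalMaxOn (· k) s x}
  have hV : ∀ k, (V k).Countable := fun k =>
    (countable_image_setOf_isLocalMinOn _ s).union (countable_image_setOf_isLocalMaxOn _ s)
  have hsV : s ⊆ {z | ∀ k, z k ∈ V k} := by
    intro z hz k
    by_cases hmin : z ∈ closure (s ∩ {x | x k < z k})
    · have hmax : IsLocalMaxOn (· k) s z :=
        isLocalMinOn_of_notMem_closure (α := ℝᵒᵈ) (h z hz k hmin)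
      exact Or.inr ⟨z, ⟨hz, hmax⟩, rfl⟩
    · exact Or.inl ⟨z, ⟨hz, isLocalMinOn_of_notMem_closure hmin⟩, rfl⟩
  exact hs ((Set.countable_pi hV).mono hsV)

section Support

variable {X : Type*} [TopologicalSpace X] [MeasurableSpace X] {μ : Measure X}

lemma mapsTo_measureSupport_of_ae_eq {f g : X → ℝ} {U : Set X} {c : ℝ} (hU : IsOpen U)
    (hg : Continuous g) (hfg : f =ᵐ[μ] g) (hf : ∀ x ∈ U, f x = c) :
    Set.MapsTo g (measureSupport μ ∩ U) {c} := by
  rintro x ⟨hx, hxU⟩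
  by_contra hgx
  have hnull : μ (U ∩ g ⁻¹' {c}ᶜ) = 0 := measure_mono_null
    (fun y hy => by simpa [hf y hy.1, eq_comm] using hy.2) (ae_iff.1 hfg)
  exact (hx _ (hU.inter (isOpen_compl_singleton.preimage hg)) ⟨hxU, hgx⟩).ne' hnull

lemma not_ae_eq_step_of_mem_closure {g : X → ℝ} (hg : Continuous g) {k : X → ℝ} (hk : Continuous k)
    {z : X} (hzL : z ∈ closure (measureSupport μ ∩ {x | k x < k z}))
    (hzR : z ∈ closure (measureSupport μ ∩ {x | k z < k x})) {A A' : ℝ} (hAA' : A ≠ A') :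
    ¬ (fun x => if k z ≤ k x then A else A') =ᵐ[μ] g := by
  intro hfg
  have hL := map_mem_closure hg hzL (mapsTo_measureSupport_of_ae_eq
    (isOpen_lt hk continuous_const) hg hfg fun x hx => if_neg (not_le.2 hx))
  have hR := map_mem_closure hg hzR (mapsTo_measureSupport_of_ae_eq
    (isOpen_lt continuous_const hk) hg hfg fun x hx => if_pos hx.le)
  rw [closure_singleton] at hL hR
  exact hAA' (hR.symm.trans hL)

end Support

lemma tendsto_eLpNorm_sub_of_tendsto {α E : Type*} [MeasurableSpace α] [NormedAddCommGroup E]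
    {μ : Measure α} [IsFiniteMeasure μ] {p : ℝ≥0∞} (hp0 : p ≠ 0) (hp : p ≠ ∞) {f : α → E}
    {g : ℕ → α → E} (hf : AEStronglyMeasurable f μ) (hg : ∀ n, AEStronglyMeasurable (g n) μ)
    {C : ℝ} (hfC : ∀ x, ‖f x‖ ≤ C) (hgC : ∀ n x, ‖g n x‖ ≤ C)
    (hlim : ∀ᵐ x ∂μ, Tendsto (fun n => g n x) atTop (𝓝 (f x))) :
    Tendsto (fun n => eLpNorm (fun x => f x - g n x) p μ) atTop (𝓝 0) := by
  have hp_pos : 0 < p.toReal := ENNReal.toReal_pos hp0 hp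
  have hint : Tendsto (fun n => ∫⁻ x, ‖f x - g n x‖ₑ ^ p.toReal ∂μ) atTop
      (𝓝 (∫⁻ _, 0 ∂μ)) := by
    refine tendsto_lintegral_of_dominated_convergence' (fun _ => ENNReal.ofReal (C + C) ^ p.toReal)
      (fun n => ((hf.sub (hg n)).enorm.pow_const _)) (fun n => ae_of_all _ fun x => ?_) ?_
      (hlim.mono fun x hx => ?_)
    · simp only [← ofReal_norm]
      exact ENNReal.rpow_le_rpow (ENNReal.ofReal_le_ofReal
        ((norm_sub_le _ _).trans (add_le_add (hfC x) (hgC n x)))) hp_pos.le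
    · rw [lintegral_const]
      exact ENNReal.mul_ne_top (ENNReal.rpow_ne_top_of_nonneg hp_pos.le ENNReal.ofReal_ne_top)
        (measure_ne_top μ _)
    · have h0 : Tendsto (fun n => ‖f x - g n x‖ₑ) atTop (𝓝 0) := by
        simpa using ((tendsto_const_nhds (x := f x)).sub hx).enorm
      simpa [Function.comp_def, ENNReal.zero_rpow_of_pos hp_pos] using
        ((ENNReal.continuous_rpow_const (y := p.toReal)).tendsto 0).comp h0
  simp_rw [eLpNorm_eq_lintegral_rpow_enorm_toReal hp0 hp]
  simpa [Function.comp_def, hp_pos] using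
    ((ENNReal.continuous_rpow_const (y := 1 / p.toReal)).tendsto _).comp hint

lemma exists_tendsto_eLpNorm_step_sub {ρ φ : ℝ → ℝ} (hcont : Continuous ρ) (hmono : Monotone ρ)
    {u v A A' C : ℝ} (huv : ρ u < ρ v) (htop : Tendsto φ atTop (𝓝 A))
    (hbot : Tendsto φ atBot (𝓝 A')) (hφ : ∀ w, |φ w| ≤ C) {m : ℕ} {N : ℕ → ℕ}
    {hNL : N (m + 2) = 1} (hreal : IsChainReadout ρ m N hNL φ) (μ : Measure (Fin (N 0) → ℝ))
    [IsFiniteMeasure μ] (k : Fin (N 0)) (θ : ℝ) {p : ℝ≥0∞} (hp0 : p ≠ 0) (hp : p ≠ ∞) :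
    ∃ Φs : ℕ → NNParams (m + 2) N, Tendsto (fun n => eLpNorm (fun x =>
      (if θ ≤ x k then A else A') - nnRealizationScalar ρ (m + 2) N hNL (Φs n) x) p μ)
      atTop (𝓝 0) := by
  obtain ⟨b, hub, hbv⟩ := exists_between huv
  choose Φs hΦs using fun n : ℕ => hreal k n (√n - n * θ) n (-(n * b))
  refine ⟨Φs, tendsto_eLpNorm_sub_of_tendsto hp0 hp
    (Measurable.ite (measurableSet_le measurable_const (measurable_pi_apply k))
      measurable_const measurable_const).aestronglyMeasurable
    (fun n => (continuous_nnRealizationScalar hcont hNL (Φs n)).aestronglyMeasurable)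
    (C := max C (max |A| |A'|)) (fun x => ?_) (fun n x => ?_) (ae_of_all _ fun x => ?_)⟩
  · split_ifs <;> simp
  · simp only [hΦs, Real.norm_eq_abs]
    exact (hφ _).trans (le_max_left _ _)
  · simp only [hΦs]
    exact tendsto_readout_iterate hmono hub hbv htop hbot m θ (x k)

theorem stmt2_general (L : ℕ) (hL : 2 ≤ L) (N : ℕ → ℕ) (hN : ∀ ℓ ≤ L, 0 < N ℓ) (hNL : N L = 1)
    (ρ : ℝ → ℝ)
    (hcont : Continuous ρ) (hmono : Monotone ρ)
    (hderiv : ∃ x₀ c : ℝ, HasDerivAt ρ c x₀ ∧ c ≠ 0)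
    (hdiff : ∃ r : ℝ, 0 < r ∧ ∀ x : ℝ, r < |x| → DifferentiableAt ℝ ρ x)
    (hiv : (∃ lam lam' : ℝ, 0 ≤ lam ∧ 0 ≤ lam' ∧ lam ≠ lam' ∧
              Tendsto (deriv ρ) atTop (nhds lam) ∧ Tendsto (deriv ρ) atBot (nhds lam') ∧
              2 ≤ N (L - 1))
          ∨ (∃ M : ℝ, ∀ x : ℝ, |ρ x| ≤ M))
    (μ : Measure (Fin (N 0) → ℝ)) (hfin : IsFiniteMeasure μ)
    (huncount : ¬ (measureSupport μ).Countable) :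
    ∃ f : (Fin (N 0) → ℝ) → ℝ, Measurable f ∧ (∃ M : ℝ, ∀ x, |f x| ≤ M) ∧
      (∀ p : ℝ, 0 < p → ∃ Φs : ℕ → NNParams L N,
        Tendsto (fun n => eLpNorm
            (fun x => f x - nnRealizationScalar ρ L N hNL (Φs n) x)
            (ENNReal.ofReal p) μ) atTop (nhds 0)) ∧
      ¬ ∃ Φ : NNParams L N, f =ᵐ[μ] fun x => nnRealizationScalar ρ L N hNL Φ x := by
  obtain ⟨m, rfl⟩ : ∃ m, L = m + 2 := ⟨L - 2, by omega⟩
  obtain ⟨x₀, c, hρ', hc⟩ := hderiv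
  obtain ⟨u, v, huv⟩ := exists_lt_of_hasDerivAt_ne_zero hρ' hc
  obtain ⟨φ, A, A', hAA', htop, hbot, ⟨C, hφ⟩, hreal⟩ : ∃ φ A A', A ≠ A' ∧
      Tendsto φ atTop (𝓝 A) ∧ Tendsto φ atBot (𝓝 A') ∧ (∃ C, ∀ w, |φ w| ≤ C) ∧
      IsChainReadout ρ m N hNL φ := by
    rcases hiv with ⟨lam, lam', -, -, hne, hlam, hlam', hwidth⟩ | ⟨M, hM⟩
    · obtain ⟨r, -, hr⟩ := hdiff
      have htop := tendsto_sub_atTop_of_tendsto_deriv hr hlam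
      have hbot := tendsto_sub_atBot_of_tendsto_deriv hr hlam'
      exact ⟨_, lam, lam', hne, htop, hbot,
        exists_abs_le_of_tendsto_atTop_atBot ((hcont.comp (continuous_add_const 1)).sub hcont)
          htop hbot,
        isChainReadout_sub hNL (fun j hj => hN _ (by omega)) hwidth⟩
    · obtain ⟨A, A', hAA', htop, hbot⟩ := exists_ne_tendsto_atTop_atBot_of_monotone hmono hM huv
      exact ⟨ρ, A, A', hAA', htop, hbot, ⟨M, hM⟩,
        isChainReadout_self hNL (fun j hj => hN _ (by omega))⟩
  obtain ⟨z, -, k, hzL, hzR⟩ := exists_mem_closure_inter_lt_and_gt huncount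
  refine ⟨fun x => if z k ≤ x k then A else A',
    Measurable.ite (measurableSet_le measurable_const (measurable_pi_apply k)) measurable_const
      measurable_const, ⟨max |A| |A'|, fun x => by dsimp only; split_ifs <;> simp⟩,
    fun p hp => exists_tendsto_eLpNorm_step_sub hcont hmono huv htop hbot hφ hreal μ k (z k)
      (by simpa using hp) ENNReal.ofReal_ne_top, ?_⟩
  rintro ⟨Φ, hΦ⟩
  exact not_ae_eq_step_of_mem_closure (continuous_nnRealizationScalar hcont hNL Φ)
    (continuous_apply k) hzL hzR hAA' hΦ

/-- Non-closedness of the set of realizations in `L^p(μ)`, `0 < p < ∞`,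
for a finite Borel measure `μ` on `[-B,B]^d` with uncountable support. -/
theorem stmt2 (L : ℕ) (hL : 2 ≤ L) (N : ℕ → ℕ) (hN : ∀ ℓ ≤ L, 0 < N ℓ) (hNL : N L = 1)
    (ρ : ℝ → ℝ)
    (hcont : Continuous ρ) (hmono : Monotone ρ)
    (hderiv : ∃ x₀ c : ℝ, HasDerivAt ρ c x₀ ∧ c ≠ 0)
    (hdiff : ∃ r : ℝ, 0 < r ∧ ∀ x : ℝ, r < |x| → DifferentiableAt ℝ ρ x)
    (hiv : (∃ lam lam' : ℝ, 0 ≤ lam ∧ 0 ≤ lam' ∧ lam ≠ lam' ∧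
              Tendsto (deriv ρ) atTop (nhds lam) ∧ Tendsto (deriv ρ) atBot (nhds lam') ∧
              2 ≤ N (L - 1))
          ∨ (∃ M : ℝ, ∀ x : ℝ, |ρ x| ≤ M))
    (B : ℝ) (hB : 0 < B)
    (μ : Measure (Fin (N 0) → ℝ)) (hfin : IsFiniteMeasure μ)
    (hμsupp : μ (Set.Icc (fun _ => -B) (fun _ => B))ᶜ = 0)
    (huncount : ¬ (measureSupport μ).Countable) :
    ∃ f : (Fin (N 0) → ℝ) → ℝ, Measurable f ∧ (∃ M : ℝ, ∀ x, |f x| ≤ M) ∧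
      (∀ p : ℝ, 0 < p → ∃ Φs : ℕ → NNParams L N,
        Tendsto (fun n => eLpNorm
            (fun x => f x - nnRealizationScalar ρ L N hNL (Φs n) x)
            (ENNReal.ofReal p) μ) atTop (nhds 0)) ∧
      ¬ ∃ Φ : NNParams L N, f =ᵐ[μ] fun x => nnRealizationScalar ρ L N hNL Φ x :=
  stmt2_general L hL N hN hNL ρ hcont hmono hderiv hdiff hiv μ hfin huncount
end

section
/- Let S = (d, N_1, ..., N_L) be a neural network architecture, let Ω ⊆ ℝ^d be compact, and let ρ : ℝ → ℝ be continuous. For C > 0, let Θ_C := { Φ : Φ is a neural network with architecture S and ‖Φ‖_total ≤ C }. Then the set of realizations R_ρ^Ω(Θ_C) = { R_ρ^Ω(Φ) : Φ ∈ Θ_C } is compact in C(Ω; ℝ^{N_L}) with the sup norm, and compact in L^p(μ) for every finite Borel measure μ on Ω and every p ∈ (0,∞). -/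
open scoped BigOperators ENNReal NNReal Pointwise
open Filter MeasureTheory Topology

/-!
The realization map `(Φ, x) ↦ R_ρ(Φ)(x)` is jointly continuous, being built from affine maps and
`ρ` by composition; currying it gives a continuous map from parameters into `C(Ω, ℝ^{N_L})`. The
parameter set `{‖Φ‖_total ≤ C}` is closed (the total norm is lower semicontinuous) and bounded in a
finite-dimensional space, hence compact, so its image is compact. Convergence in `C(Ω, ℝ^{N_L})` is
uniform convergence on `Ω`, which implies convergence in `L^p(μ)` for a finite measure `μ`
carried by `Ω`.
-/

section Continuity

variable {α : Type*} [TopologicalSpace α]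

@[fun_prop]
lemma Continuous.nnAffine {N : ℕ → ℕ} {ℓ : ℕ} {W : α → NNLayer N ℓ} {x : α → Fin (N ℓ) → ℝ}
    (hW : Continuous W) (hx : Continuous x) : Continuous fun t => nnAffine (W t) (x t) := by
  unfold _root_.nnAffine
  fun_prop

lemma Continuous.nnHidden {ρ : ℝ → ℝ} (hρ : Continuous ρ) {L : ℕ} {N : ℕ → ℕ}
    {Φ : α → NNParams L N} {x : α → Fin (N 0) → ℝ} (hΦ : Continuous Φ) (hx : Continuous x) :
    Continuous fun t => nnHidden ρ L N (Φ t) (x t) := by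
  induction L generalizing N with
  | zero => simpa only [_root_.nnHidden] using hx
  | succ L ih =>
    simp only [_root_.nnHidden]
    exact ih (by fun_prop) (by fun_prop)

lemma Continuous.nnRealization {ρ : ℝ → ℝ} (hρ : Continuous ρ) {L : ℕ} {N : ℕ → ℕ}
    {Φ : α → NNParams L N} {x : α → Fin (N 0) → ℝ} (hΦ : Continuous Φ) (hx : Continuous x) :
    Continuous fun t => nnRealization ρ L N (Φ t) (x t) := by
  cases L with
  | zero => simpa only [_root_.nnRealization] using hx
  | succ L =>
    simp only [_root_.nnRealization]
    exact Continuous.nnAffine (by fun_prop) (hρ.nnHidden (by fun_prop) hx)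

end Continuity

noncomputable def nnRealizationOn (ρ : ℝ → ℝ) (hρ : Continuous ρ) (L : ℕ) (N : ℕ → ℕ)
    (Ω : Set (Fin (N 0) → ℝ)) : C(NNParams L N, C(Ω, Fin (N L) → ℝ)) :=
  ContinuousMap.curry
    ⟨fun p => nnRealization ρ L N p.1 p.2, hρ.nnRealization continuous_fst (by fun_prop)⟩

@[simp]
lemma nnRealizationOn_apply (ρ : ℝ → ℝ) (hρ : Continuous ρ) (L : ℕ) (N : ℕ → ℕ)
    (Ω : Set (Fin (N 0) → ℝ)) (Φ : NNParams L N) (x : Ω) :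
    nnRealizationOn ρ hρ L N Ω Φ x = nnRealization ρ L N Φ x :=
  rfl

section ParameterSet

variable {L : ℕ} {N : ℕ → ℕ}

lemma norm_le_nnTotalNorm (Φ : NNParams L N) : ‖Φ‖ ≤ nnTotalNorm Φ := by
  have hbdd₁ : BddAbove (Set.range fun ℓ => ‖(Φ ℓ).1‖) := (Set.finite_range _).bddAbove
  have hbdd₂ : BddAbove (Set.range fun ℓ => ‖(Φ ℓ).2‖) := (Set.finite_range _).bddAbove
  have hnonneg₁ : 0 ≤ ⨆ ℓ, ‖(Φ ℓ).1‖ := Real.iSup_nonneg fun _ => norm_nonneg _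
  have hnonneg₂ : 0 ≤ ⨆ ℓ, ‖(Φ ℓ).2‖ := Real.iSup_nonneg fun _ => norm_nonneg _
  refine (pi_norm_le_iff_of_nonneg (add_nonneg hnonneg₁ hnonneg₂)).2 fun ℓ => ?_
  rw [Prod.norm_def]
  exact max_le ((le_ciSup hbdd₁ ℓ).trans (le_add_of_nonneg_right hnonneg₂))
    ((le_ciSup hbdd₂ ℓ).trans (le_add_of_nonneg_left hnonneg₁))

lemma lowerSemicontinuous_nnTotalNorm :
    LowerSemicontinuous (nnTotalNorm : NNParams L N → ℝ) := by
  have hsup {E : ℕ → Type} [∀ ℓ, NormedAddCommGroup (E ℓ)]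
      {f : NNParams L N → (ℓ : Fin L) → E ℓ} (hf : Continuous f) :
      LowerSemicontinuous fun Φ => ⨆ ℓ, ‖f Φ ℓ‖ :=
    lowerSemicontinuous_ciSup (fun _ => (Set.finite_range _).bddAbove)
      fun ℓ => (continuous_norm.comp (continuous_apply ℓ |>.comp hf)).lowerSemicontinuous
  exact (hsup (E := fun ℓ => Fin (N (ℓ + 1)) → Fin (N ℓ) → ℝ) (by fun_prop)).add
    (hsup (E := fun ℓ => Fin (N (ℓ + 1)) → ℝ) (by fun_prop))

lemma isCompact_nnTotalNorm_le (C : ℝ) : IsCompact {Φ : NNParams L N | nnTotalNorm Φ ≤ C} :=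
  (isCompact_closedBall 0 C).of_isClosed_subset
    (lowerSemicontinuous_nnTotalNorm.isClosed_preimage C)
    fun Φ hΦ => mem_closedBall_zero_iff.2 ((norm_le_nnTotalNorm Φ).trans hΦ)

end ParameterSet

lemma tendsto_eLpNorm_of_tendsto_continuousMap {X E ι : Type*} [TopologicalSpace X]
    [MeasurableSpace X] [NormedAddCommGroup E] {Ω : Set X} [CompactSpace Ω] {μ : Measure X}
    [IsFiniteMeasure μ] (hμΩ : μ Ωᶜ = 0) (p : ℝ≥0∞) {l : Filter ι} {f : ι → X → E}
    {F : ι → C(Ω, E)} (hfF : ∀ i (x : Ω), f i x = F i x) (hF : Tendsto F l (𝓝 0)) :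
    Tendsto (fun i => eLpNorm (f i) p μ) l (𝓝 0) := by
  have hae : ∀ᵐ x ∂μ, x ∈ Ω := ae_iff.2 hμΩ
  have hbound (i : ι) : eLpNorm (f i) p μ ≤ μ Set.univ ^ p.toReal⁻¹ * ENNReal.ofReal ‖F i‖ :=
    eLpNorm_le_of_ae_bound <| hae.mono fun x hx => hfF i ⟨x, hx⟩ ▸ (F i).norm_coe_le_norm _
  have hlim : Tendsto (fun i => μ Set.univ ^ p.toReal⁻¹ * ENNReal.ofReal ‖F i‖) l (𝓝 0) := by
    simpa using ENNReal.Tendsto.const_mul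
      (ENNReal.tendsto_ofReal (tendsto_zero_iff_norm_tendsto_zero.1 hF)) (Or.inr (ENNReal.rpow_ne_top_of_nonneg (by positivity) (measure_ne_top μ _)))
  exact tendsto_of_tendsto_of_tendsto_of_le_of_le tendsto_const_nhds hlim (fun _ => zero_le) hbound

theorem stmt4_general (L : ℕ) (N : ℕ → ℕ)
    (Ω : Set (Fin (N 0) → ℝ)) (hΩ : IsCompact Ω)
    (ρ : ℝ → ℝ) (hρ : Continuous ρ) (C : ℝ) :
    IsCompact {f : C(Ω, Fin (N L) → ℝ) |
        ∃ Φ : NNParams L N, nnTotalNorm Φ ≤ C ∧ ∀ x : Ω, f x = nnRealization ρ L N Φ x.val} ∧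
    ∀ μ : Measure (Fin (N 0) → ℝ), IsFiniteMeasure μ → μ Ωᶜ = 0 →
      ∀ p : ℝ, 0 < p →
        ∀ Φs : ℕ → NNParams L N, (∀ n, nnTotalNorm (Φs n) ≤ C) →
          ∃ (Ψ : NNParams L N) (φ : ℕ → ℕ), nnTotalNorm Ψ ≤ C ∧ StrictMono φ ∧
            Tendsto (fun n => eLpNorm
                (fun x => nnRealization ρ L N (Φs (φ n)) x - nnRealization ρ L N Ψ x)
                (ENNReal.ofReal p) μ) atTop (nhds 0) := by
  have : CompactSpace Ω := isCompact_iff_compactSpace.mp hΩ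
  set F := nnRealizationOn ρ hρ L N Ω
  have hΘ := isCompact_nnTotalNorm_le (L := L) (N := N) C
  refine ⟨?_, fun μ _ hμΩ p _ Φs hΦs => ?_⟩
  · convert hΘ.image F.continuous using 1
    ext f
    simp [F, ContinuousMap.ext_iff, eq_comm]
  · obtain ⟨Ψ, hΨ, φ, hφ, hconv⟩ := hΘ.isSeqCompact hΦs
    refine ⟨Ψ, φ, hΨ, hφ, tendsto_eLpNorm_of_tendsto_continuousMap hμΩ _
      (F := fun n => F (Φs (φ n)) - F Ψ) (fun n x => rfl) ?_⟩
    exact tendsto_sub_nhds_zero_iff.2 ((F.continuous.tendsto Ψ).comp hconv)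

/-- The set of realizations of networks with fixed architecture and
`‖·‖_total`-bounded weights is compact in `C(Ω; ℝ^{N L})` and (sequentially) compact in
`L^p(μ)` for every finite Borel measure `μ` on the compact set `Ω` and every `0 < p < ∞`. -/
theorem stmt4 (L : ℕ) (hL : 1 ≤ L) (N : ℕ → ℕ) (hN : ∀ ℓ ≤ L, 0 < N ℓ)
    (Ω : Set (Fin (N 0) → ℝ)) (hΩ : IsCompact Ω)
    (ρ : ℝ → ℝ) (hρ : Continuous ρ) (C : ℝ) (hC : 0 < C) :
    IsCompact {f : C(Ω, Fin (N L) → ℝ) |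
        ∃ Φ : NNParams L N, nnTotalNorm Φ ≤ C ∧ ∀ x : Ω, f x = nnRealization ρ L N Φ x.val} ∧
    ∀ μ : Measure (Fin (N 0) → ℝ), IsFiniteMeasure μ → μ Ωᶜ = 0 →
      ∀ p : ℝ, 0 < p →
        ∀ Φs : ℕ → NNParams L N, (∀ n, nnTotalNorm (Φs n) ≤ C) →
          ∃ (Ψ : NNParams L N) (φ : ℕ → ℕ), nnTotalNorm Ψ ≤ C ∧ StrictMono φ ∧
            Tendsto (fun n => eLpNorm
                (fun x => nnRealization ρ L N (Φs (φ n)) x - nnRealization ρ L N Ψ x)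
                (ENNReal.ofReal p) μ) atTop (nhds 0) :=
  stmt4_general L N Ω hΩ ρ hρ C
end

section
/- Let S = (d, N_1, ..., N_L) be a neural network architecture with N_0 := d, let ρ : ℝ → ℝ be locally Lipschitz continuous, and let Ω ⊆ ℝ^d be nonempty. If V is a real vector subspace of the space of functions Ω → ℝ^{N_L} with V ⊆ RNN_ρ^Ω(S), then dim V ≤ Σ_{ℓ=1}^L (N_{ℓ-1} + 1) N_ℓ. -/
/-!
A linearly independent family `f₁, …, fₙ` in `V` stays linearly independent after restriction to
a suitable finite set `F` of points, because the kernels of finitely many point evaluations on a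
finite-dimensional space already cut out everything the evaluations at all points do. The span of
the restrictions is then an `n`-dimensional linear subspace of `F → ℝ^{N_L}` lying in the image of
the parameter space `ℝ^P` under `Φ ↦ (R(Φ)(x))_{x ∈ F}`. That map is locally Lipschitz because
`ρ` is, and locally Lipschitz maps do not increase Hausdorff dimension, so `n ≤ P`.
-/

open scoped BigOperators ENNReal NNReal Pointwise
open Filter MeasureTheory Topology

/-- The set of realizations of networks with architecture `(N 0, …, N L)`
and activation `ρ`, as functions on `Ω`. -/
def RNNset (ρ : ℝ → ℝ) (L : ℕ) (N : ℕ → ℕ) (Ω : Set (Fin (N 0) → ℝ)) :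
    Set (Ω → Fin (N L) → ℝ) :=
  {f | ∃ Φ : NNParams L N, ∀ x : Ω, f x = nnRealization ρ L N Φ x.val}

theorem LocallyLipschitz.pi {α ι : Type*} [PseudoEMetricSpace α] [Fintype ι]
    {β : ι → Type*} [∀ i, PseudoEMetricSpace (β i)] {f : (i : ι) → α → β i}
    (hf : ∀ i, LocallyLipschitz (f i)) : LocallyLipschitz fun a i => f i a := by
  intro x
  choose K t ht hK using fun i => hf i x
  refine ⟨Finset.univ.sup K, ⋂ i, t i, Filter.iInter_mem.2 ht, fun a ha b hb => ?_⟩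
  refine edist_pi_le_iff.2 fun i => ?_
  calc edist (f i a) (f i b) ≤ K i * edist a b :=
        hK i (Set.mem_iInter.1 ha i) (Set.mem_iInter.1 hb i)
    _ ≤ _ := by gcongr; exact Finset.le_sup (Finset.mem_univ i)

theorem Submodule.exists_finset_disjoint_ker_funLeft {K ι M : Type*} [DivisionRing K]
    [AddCommGroup M] [Module K M] (W : Submodule K (ι → M)) [FiniteDimensional K W] :
    ∃ F : Finset ι, Disjoint W (LinearMap.ker (LinearMap.funLeft K M ((↑) : F → ι))) := by
  classical
  let k : Finset ι → Submodule K W := fun F =>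
    ⨅ i ∈ F, LinearMap.ker ((LinearMap.proj i).comp W.subtype)
  obtain ⟨_, ⟨F, rfl⟩, hF⟩ := IsArtinian.set_has_minimal (Set.range k) ⟨_, ∅, rfl⟩
  refine ⟨F, Submodule.disjoint_def.2 fun w hwW hwF => ?_⟩
  have hw : (⟨w, hwW⟩ : W) ∈ k F := by
    simpa [k, funext_iff, LinearMap.funLeft_apply] using hwF
  funext i
  have hki : k (insert i F) = k F :=
    eq_of_le_of_not_lt (iInf₂_mono' fun j hj => ⟨j, Finset.mem_insert_of_mem hj, le_rfl⟩)
      (hF _ ⟨_, rfl⟩)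
  rw [← hki] at hw
  simpa [k] using
    (Submodule.mem_iInf _).1 ((Submodule.mem_iInf _).1 hw i) (Finset.mem_insert_self i F)

theorem Submodule.dimH_coe {E : Type*} [NormedAddCommGroup E] [NormedSpace ℝ E]
    (S : Submodule ℝ E) [FiniteDimensional ℝ S] :
    dimH (S : Set E) = Module.finrank ℝ S := by
  rw [← Subtype.range_coe (s := (S : Set E)), ← Set.image_univ, isometry_subtype_coe.dimH_image,
    Real.dimH_univ_eq_finrank]
  rfl

theorem Submodule.finrank_le_of_subset_range_locallyLipschitz {E F : Type*}
    [NormedAddCommGroup E] [NormedSpace ℝ E] [FiniteDimensional ℝ E]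
    [NormedAddCommGroup F] [NormedSpace ℝ F] {f : E → F} (hf : LocallyLipschitz f)
    (S : Submodule ℝ F) [FiniteDimensional ℝ S] (hS : (S : Set F) ⊆ Set.range f) :
    Module.finrank ℝ S ≤ Module.finrank ℝ E := by
  have : (Module.finrank ℝ S : ℝ≥0∞) ≤ Module.finrank ℝ E :=
    calc (Module.finrank ℝ S : ℝ≥0∞) = dimH (S : Set F) := S.dimH_coe.symm
      _ ≤ dimH (Set.range f) := dimH_mono hS
      _ ≤ dimH (Set.univ : Set E) := dimH_range_le_of_locally_lipschitzOn hf
      _ = Module.finrank ℝ E := Real.dimH_univ_eq_finrank E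
  exact_mod_cast this

theorem Submodule.rank_le_of_subset_range_locallyLipschitz {E M ι : Type*}
    [NormedAddCommGroup E] [NormedSpace ℝ E] [FiniteDimensional ℝ E]
    [NormedAddCommGroup M] [NormedSpace ℝ M] {T : E → ι → M}
    (hT : ∀ i, LocallyLipschitz fun p => T p i) (V : Submodule ℝ (ι → M))
    (hV : (V : Set (ι → M)) ⊆ Set.range T) :
    Module.rank ℝ V ≤ Module.finrank ℝ E := by
  refine _root_.rank_le fun s hs => ?_
  let v : s → ι → M := fun i => (i : V)
  have hv : LinearIndependent ℝ v := hs.map' V.subtype V.ker_subtype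
  have := FiniteDimensional.span_of_finite ℝ (Set.finite_range v)
  obtain ⟨F, hF⟩ := (Submodule.span ℝ (Set.range v)).exists_finset_disjoint_ker_funLeft
  let restrict := LinearMap.funLeft ℝ M ((↑) : F → ι)
  have hrv : LinearIndependent ℝ (restrict ∘ v) := hv.map hF
  let S := Submodule.span ℝ (Set.range (restrict ∘ v))
  have hS : (S : Set (F → M)) ⊆ Set.range (restrict ∘ T) := by
    have hSV : S ≤ V.map restrict :=
      Submodule.span_le.2 <| Set.range_subset_iff.2 fun i => ⟨v i, (i : V).2, rfl⟩
    rintro _ hy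
    obtain ⟨f, hfV, rfl⟩ := hSV hy
    obtain ⟨p, rfl⟩ := hV hfV
    exact ⟨p, rfl⟩
  have := FiniteDimensional.span_of_finite ℝ (Set.finite_range (restrict ∘ v))
  have := S.finrank_le_of_subset_range_locallyLipschitz
    (LocallyLipschitz.pi fun i : F => hT i) hS
  rwa [finrank_span_eq_card hrv, Fintype.card_coe] at this

theorem contDiff_nnAffine {N : ℕ → ℕ} {ℓ : ℕ} :
    ContDiff ℝ 1 fun p : NNLayer N ℓ × (Fin (N ℓ) → ℝ) => nnAffine p.1 p.2 := by
  refine contDiff_pi.2 fun i => ContDiff.add (ContDiff.sum fun j _ => ContDiff.mul ?_ ?_) ?_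
  · exact (contDiff_apply_apply ℝ ℝ i j).comp (contDiff_fst.comp contDiff_fst)
  · exact (contDiff_apply ℝ ℝ j).comp contDiff_snd
  · exact (contDiff_apply ℝ ℝ i).comp (contDiff_snd.comp contDiff_fst)

theorem locallyLipschitz_comp_nnAffine {ρ : ℝ → ℝ} (hρ : LocallyLipschitz ρ)
    {N : ℕ → ℕ} {ℓ : ℕ} :
    LocallyLipschitz fun p : NNLayer N ℓ × (Fin (N ℓ) → ℝ) => fun i => ρ (nnAffine p.1 p.2 i) :=
  LocallyLipschitz.pi fun i =>
    hρ.comp ((LipschitzWith.eval i).locallyLipschitz.comp contDiff_nnAffine.locallyLipschitz)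

theorem locallyLipschitz_nnHidden {ρ : ℝ → ℝ} (hρ : LocallyLipschitz ρ) :
    ∀ (L : ℕ) (N : ℕ → ℕ),
      LocallyLipschitz fun p : NNParams L N × (Fin (N 0) → ℝ) => nnHidden ρ L N p.1 p.2
  | 0, _ => LipschitzWith.prod_snd.locallyLipschitz
  | L + 1, N => by
    have hlayer (k : Fin (L + 1)) :
        LocallyLipschitz fun p : NNParams (L + 1) N × (Fin (N 0) → ℝ) => p.1 k :=
      ((LipschitzWith.eval k).comp LipschitzWith.prod_fst).locallyLipschitz
    have hfirst : LocallyLipschitz fun p : NNParams (L + 1) N × (Fin (N 0) → ℝ) =>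
        (p.1 ⟨0, L.succ_pos⟩, p.2) :=
      (hlayer _).prodMk LipschitzWith.prod_snd.locallyLipschitz
    have htail : LocallyLipschitz fun p : NNParams (L + 1) N × (Fin (N 0) → ℝ) =>
        (fun ℓ : Fin L => p.1 ⟨ℓ.val + 1, Nat.succ_lt_succ ℓ.isLt⟩ :
          NNParams L fun k => N (k + 1)) :=
      LocallyLipschitz.pi fun ℓ => hlayer _
    exact (locallyLipschitz_nnHidden hρ L fun k => N (k + 1)).comp
      (htail.prodMk ((locallyLipschitz_comp_nnAffine hρ).comp hfirst))

theorem locallyLipschitz_nnRealization {ρ : ℝ → ℝ} (hρ : LocallyLipschitz ρ) :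
    ∀ (L : ℕ) (N : ℕ → ℕ),
      LocallyLipschitz fun p : NNParams L N × (Fin (N 0) → ℝ) => nnRealization ρ L N p.1 p.2
  | 0, _ => LipschitzWith.prod_snd.locallyLipschitz
  | L + 1, N => by
    have hlayer (k : Fin (L + 1)) :
        LocallyLipschitz fun p : NNParams (L + 1) N × (Fin (N 0) → ℝ) => p.1 k :=
      ((LipschitzWith.eval k).comp LipschitzWith.prod_fst).locallyLipschitz
    have hinit : LocallyLipschitz fun p : NNParams (L + 1) N × (Fin (N 0) → ℝ) =>
        ((fun ℓ : Fin L => p.1 ⟨ℓ.val, Nat.lt_succ_of_lt ℓ.isLt⟩ : NNParams L N), p.2) :=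
      (LocallyLipschitz.pi fun ℓ => hlayer _).prodMk LipschitzWith.prod_snd.locallyLipschitz
    have hunfold : (fun p : NNParams (L + 1) N × (Fin (N 0) → ℝ) =>
        nnRealization ρ (L + 1) N p.1 p.2) =
        (fun q : NNLayer N L × (Fin (N L) → ℝ) => nnAffine q.1 q.2) ∘
          fun p => (p.1 ⟨L, L.lt_succ_self⟩,
            nnHidden ρ L N (fun ℓ : Fin L => p.1 ⟨ℓ.val, Nat.lt_succ_of_lt ℓ.isLt⟩) p.2) := rfl
    rw [hunfold]
    exact contDiff_nnAffine.locallyLipschitz.comp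
      ((hlayer _).prodMk ((locallyLipschitz_nnHidden hρ L N).comp hinit))

theorem finrank_nnParams (L : ℕ) (N : ℕ → ℕ) :
    Module.finrank ℝ (NNParams L N) = ∑ ℓ ∈ Finset.range L, (N ℓ + 1) * N (ℓ + 1) := by
  rw [Module.finrank_pi_fintype, ← Fin.sum_univ_eq_sum_range (fun ℓ => (N ℓ + 1) * N (ℓ + 1))]
  refine Finset.sum_congr rfl fun ℓ _ => ?_
  simp only [Module.finrank_prod, Module.finrank_pi_fintype, Module.finrank_self,
    Finset.sum_const, Finset.card_univ, Fintype.card_fin, smul_eq_mul]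
  ring

theorem stmt13_general (L : ℕ) (N : ℕ → ℕ)
    (ρ : ℝ → ℝ) (hρ : LocallyLipschitz ρ)
    (Ω : Set (Fin (N 0) → ℝ))
    (V : Submodule ℝ (Ω → Fin (N L) → ℝ))
    (hV : (V : Set (Ω → Fin (N L) → ℝ)) ⊆ RNNset ρ L N Ω) :
    Module.rank ℝ V ≤ (∑ ℓ ∈ Finset.range L, (N ℓ + 1) * N (ℓ + 1) : ℕ) := by
  rw [← finrank_nnParams]
  refine V.rank_le_of_subset_range_locallyLipschitz
    (T := fun Φ (x : Ω) => nnRealization ρ L N Φ x)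
    (fun x => (locallyLipschitz_nnRealization hρ L N).comp (.prodMk_right x.val)) ?_
  intro f hf
  obtain ⟨Φ, hΦ⟩ := hV hf
  exact ⟨Φ, funext fun x => (hΦ x).symm⟩

/-- A vector subspace contained in the set of realizations has dimension at
most the number of network parameters. -/
theorem stmt13 (L : ℕ) (hL : 1 ≤ L) (N : ℕ → ℕ) (hN : ∀ ℓ ≤ L, 0 < N ℓ)
    (ρ : ℝ → ℝ) (hρ : LocallyLipschitz ρ)
    (Ω : Set (Fin (N 0) → ℝ)) (hΩ : Ω.Nonempty)
    (V : Submodule ℝ (Ω → Fin (N L) → ℝ))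
    (hV : (V : Set (Ω → Fin (N L) → ℝ)) ⊆ RNNset ρ L N Ω) :
    Module.rank ℝ V ≤ (∑ ℓ ∈ Finset.range L, (N ℓ + 1) * N (ℓ + 1) : ℕ) :=
  stmt13_general L N ρ hρ Ω V hV
end
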